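/- Cutting defines a bijection between the set C(W^p) of symmetric type D cup diagrams on 4n points and the set dC(n) of decorated (n,k)-tangles (1 ≤ k ≤ n) in which every bottom point is connected to a top point and the number of dotted edges plus the number of undotted cups is even. -/
import Mathlib


namespace TypeD

attribute [local instance] Classical.propDecidable

/-- A `{+,-}`-sequence of length `n`; `true` encodes a minus sign. -/
abbrev Seq (n : ℕ) := Fin n → Bool

/-- The sequence has an even number of minus signs. -/
def EvenMinus {n : ℕ} (α : Seq n) : Prop :=
  Even ({i : Fin n | α i = true}.ncard)

/-- The extended diagrammatical weight of a sequence, as labels on `4n` points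
(indices `0,…,4n-1` correspond to the points `-2n,…,-1,1,…,2n`):
`n` frozen pluses on the left, then the antisymmetric extension of `α`,
then `n` frozen minuses on the right.  `true` = minus = `∧`, `false` = plus = `∨`. -/
def extLab {n : ℕ} (α : Seq n) (i : Fin (4 * n)) : Bool :=
  if _h1 : i.val < n then false
  else if _h2 : i.val < 2 * n then !α ⟨2 * n - 1 - i.val, by omega⟩
  else if _h3 : i.val < 3 * n then α ⟨i.val - 2 * n, by omega⟩
  else true

/-- A perfect matching of `m` points on a line by non-crossing arcs drawn in the
lower half plane, encoded as a fixed-point free involution. -/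
structure IsMatching {m : ℕ} (f : Fin m → Fin m) : Prop where
  invol : ∀ i, f (f i) = i
  nofix : ∀ i, f i ≠ i
  noncross : ∀ a b : Fin m, a < f a → b < f b → a < b → b < f a → f b < f a

/-- The non-crossing matching of the `4n` extended points of `α` in which every arc
joins a plus to a minus lying to its right. -/
def IsNC {n : ℕ} (α : Seq n) (f : Fin (4 * n) → Fin (4 * n)) : Prop :=
  IsMatching f ∧ ∀ i, i < f i → extLab α i = false ∧ extLab α (f i) = true

/-- The arc of `f` starting at `i` crosses the middle of the diagram. -/
def Cross {n : ℕ} (f : Fin (4 * n) → Fin (4 * n)) (i : Fin (4 * n)) : Prop :=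
  i.val < 2 * n ∧ 2 * n ≤ (f i).val

/-- The rank of a middle-crossing arc (with left endpoint `a`), counting from the
innermost one (which has rank `1`). -/
noncomputable def rank {n : ℕ} (f : Fin (4 * n) → Fin (4 * n)) (a : Fin (4 * n)) : ℕ :=
  {b : Fin (4 * n) | Cross f b ∧ a ≤ b}.ncard

/-- The cup diagram `C(w)` of a sequence: the non-crossing matching `f` of the
extended weight, where the middle-crossing arcs, taken from innermost outwards in
consecutive pairs, have two of their boundary points exchanged (the resulting pairs
of arcs being `linked`, i.e. decorated). `g` is the resulting pairing of endpoints. -/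
structure CupDiagram (n : ℕ) (α : Seq n) where
  f : Fin (4 * n) → Fin (4 * n)
  g : Fin (4 * n) → Fin (4 * n)
  matching : IsNC α f
  agree : ∀ i, ¬ Cross f i → ¬ Cross f (f i) → g i = f i
  link : ∀ a b, Cross f a → Cross f b → Odd (rank f a) → rank f b = rank f a + 1 →
    g a = f b ∧ g b = f a ∧ g (f b) = a ∧ g (f a) = b

/-- `g` is (the pairing underlying) the cup diagram of `α`. -/
def IsCupDiagram {n : ℕ} (α : Seq n) (g : Fin (4 * n) → Fin (4 * n)) : Prop :=
  ∃ D : CupDiagram n α, D.g = g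

/-- The arcs of the cup diagram starting at `a` and at `b` form a linked
(decorated) pair. -/
def CupDiagram.Linked {n : ℕ} {α : Seq n} (D : CupDiagram n α) (a b : Fin (4 * n)) : Prop :=
  Cross D.f a ∧ Cross D.f b ∧ Odd (rank D.f a) ∧ rank D.f b = rank D.f a + 1

/-- The weight `v` orients the (cup or cap) diagram `g`: every arc carries exactly one
`∧` and one `∨`. -/
def Orients {n : ℕ} (v : Seq n) (g : Fin (4 * n) → Fin (4 * n)) : Prop :=
  ∀ i, extLab v (g i) ≠ extLab v i

/-- The number of clockwise oriented cups (cups with `∧` at their left endpoint). -/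
noncomputable def clCount {n : ℕ} (v : Seq n) (g : Fin (4 * n) → Fin (4 * n)) : ℕ :=
  {i : Fin (4 * n) | i < g i ∧ extLab v i = true}.ncard

/-- The mirror (reflection through the middle vertical axis) of a point. -/
def mirror {n : ℕ} (i : Fin (4 * n)) : Fin (4 * n) :=
  ⟨4 * n - 1 - i.val, by have := i.isLt; omega⟩


/-- Raw data of a decorated half-diagram on `n` points: a pairing (fixed points are the
endpoints of edges going down to the bottom face; other points are paired by cups) and a
decoration function (`true` = the strand through this point carries a dot). -/
abbrev RawDiag (n : ℕ) := (Fin n → Fin n) × (Fin n → Bool)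

/-- `D` is an (even) decorated cup diagram, i.e. an element of `dC(n)`:
a crossingless decorated `(n,k)`-tangle in which every bottom point is connected to a
top point, every dot is accessible from the left, and the number of dotted edges plus the
number of undotted cups is even. -/
def IsDecCup {n : ℕ} (D : RawDiag n) : Prop :=
  (∀ i, D.1 (D.1 i) = i) ∧
  (∀ a b : Fin n, a < D.1 a → b < D.1 b → a < b → b < D.1 a → D.1 b < D.1 a) ∧
  (∀ a e : Fin n, a < D.1 a → D.1 e = e → ¬(a < e ∧ e < D.1 a)) ∧
  (∀ i, D.2 i = true → D.2 (D.1 i) = true) ∧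
  (∀ i, D.2 i = true → i ≤ D.1 i →
    (∀ j, j < D.1 j → ¬(j < i ∧ D.1 i < D.1 j)) ∧ (∀ e, D.1 e = e → ¬ e < i)) ∧
  Even ({i : Fin n | D.1 i = i ∧ D.2 i = true}.ncard
      + {i : Fin n | i < D.1 i ∧ D.2 i = false}.ncard)

/-- `W^p`, identified with `{+,-}`-sequences with an even number of minuses. -/
abbrev Wp (n : ℕ) := {α : Seq n // EvenMinus α}

/-! ### Auxiliary development -/

section AuxCard

lemma even_card_invol {m : ℕ} (s : Finset (Fin m)) (φ : Fin m → Fin m)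
    (hmem : ∀ i ∈ s, φ i ∈ s) (hinv : ∀ i ∈ s, φ (φ i) = i) (hfix : ∀ i ∈ s, φ i ≠ i) :
    Even s.card := by
  classical
  set s1 := s.filter (fun i => i < φ i) with hs1
  set s2 := s.filter (fun i => φ i < i) with hs2
  have hsplit : s = s1 ∪ s2 := by
    ext i
    simp only [hs1, hs2, Finset.mem_union, Finset.mem_filter]
    constructor
    · intro hi
      rcases lt_trichotomy i (φ i) with h | h | h
      · exact Or.inl ⟨hi, h⟩
      · exact absurd h.symm (hfix i hi)
      · exact Or.inr ⟨hi, h⟩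
    · rintro (⟨h, _⟩ | ⟨h, _⟩) <;> exact h
  have hdisj : Disjoint s1 s2 := by
    simp only [Finset.disjoint_left, hs1, hs2, Finset.mem_filter]
    rintro i ⟨_, h1⟩ ⟨_, h2⟩
    exact absurd (h1.trans h2) (lt_irrefl i)
  have himg : s2 = s1.image φ := by
    ext j
    simp only [hs1, hs2, Finset.mem_filter, Finset.mem_image]
    constructor
    · rintro ⟨hj, hlt⟩
      exact ⟨φ j, ⟨hmem j hj, by rw [hinv j hj]; exact hlt⟩, hinv j hj⟩
    · rintro ⟨i, ⟨hi, hlt⟩, rfl⟩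
      rw [hinv i hi]
      exact ⟨hmem i hi, hlt⟩
  have hinj : Set.InjOn φ s1 := by
    intro a ha b hb hab
    have ha' := (Finset.mem_filter.mp ha).1
    have hb' := (Finset.mem_filter.mp hb).1
    have h2 := hinv a ha'
    rw [hab, hinv b hb'] at h2
    exact h2.symm
  have hcard : s2.card = s1.card := by
    rw [himg]
    exact Finset.card_image_of_injOn hinj
  rw [hsplit, Finset.card_union_of_disjoint hdisj, hcard]
  exact ⟨s1.card, by ring⟩

end AuxCard

section AuxLab

variable {n : ℕ}

@[simp] lemma mirror_val (i : Fin (4 * n)) : (mirror i).val = 4 * n - 1 - i.val := rfl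

@[simp] lemma mirror_mirror (i : Fin (4 * n)) : mirror (mirror i) = i := by
  apply Fin.ext
  have := i.isLt
  simp [mirror]
  omega

lemma mirror_lt_iff {i j : Fin (4 * n)} : mirror i < mirror j ↔ j < i := by
  have hi := i.isLt; have hj := j.isLt
  simp only [Fin.lt_def, mirror_val]
  omega

lemma extLab_lt_n {α : Seq n} {i : Fin (4 * n)} (h : i.val < n) : extLab α i = false := by
  rw [extLab, dif_pos h]

lemma extLab_mid_left {α : Seq n} {i : Fin (4 * n)} (h1 : n ≤ i.val) (h2 : i.val < 2 * n) :
    extLab α i = !α ⟨2 * n - 1 - i.val, by omega⟩ := by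
  rw [extLab, dif_neg (by omega), dif_pos h2]

lemma extLab_pt {α : Seq n} {i : Fin (4 * n)} (h1 : 2 * n ≤ i.val) (h2 : i.val < 3 * n) :
    extLab α i = α ⟨i.val - 2 * n, by omega⟩ := by
  rw [extLab, dif_neg (by omega), dif_neg (by omega), dif_pos h2]

lemma extLab_ge {α : Seq n} {i : Fin (4 * n)} (h : 3 * n ≤ i.val) : extLab α i = true := by
  have := i.isLt
  rw [extLab, dif_neg (by omega), dif_neg (by omega), dif_neg (by omega)]

lemma extLab_mirror (α : Seq n) (i : Fin (4 * n)) : extLab α (mirror i) = !extLab α i := by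
  have hi := i.isLt
  have hn : 0 < n := by omega
  have hm := mirror_val i
  rcases Nat.lt_or_ge i.val n with h | h
  · rw [extLab_lt_n h, extLab_ge (i := mirror i) (by omega)]
    rfl
  · rcases Nat.lt_or_ge i.val (2 * n) with h2 | h2
    · rw [extLab_mid_left h h2, extLab_pt (i := mirror i) (by omega) (by omega)]
      rw [Bool.not_not]
      congr 1
      exact Fin.ext (by simp [hm]; omega)
    · rcases Nat.lt_or_ge i.val (3 * n) with h3 | h3
      · rw [extLab_pt h2 h3, extLab_mid_left (i := mirror i) (by omega) (by omega)]
        congr 2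
        exact Fin.ext (by simp [hm]; omega)
      · rw [extLab_ge h3, extLab_lt_n (i := mirror i) (by omega)]
        rfl

end AuxLab

section AuxMatching

variable {n : ℕ} {α : Seq n} {f : Fin (4 * n) → Fin (4 * n)}

lemma IsNC.invol (hf : IsNC α f) (i : Fin (4 * n)) : f (f i) = i := hf.1.invol i

lemma IsNC.finj (hf : IsNC α f) : Function.Injective f :=
  Function.LeftInverse.injective hf.1.invol

lemma IsNC.lab_false_iff (hf : IsNC α f) (i : Fin (4 * n)) :
    i < f i ↔ extLab α i = false := by
  constructor
  · intro h; exact (hf.2 i h).1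
  · intro h
    rcases lt_trichotomy i (f i) with hh | hh | hh
    · exact hh
    · exact absurd hh.symm (hf.1.nofix i)
    · have h2 := (hf.2 (f i) (by rw [hf.invol]; exact hh)).2
      rw [hf.invol, h] at h2
      exact absurd h2 (by simp)

lemma IsNC.lab_true_iff (hf : IsNC α f) (i : Fin (4 * n)) :
    f i < i ↔ extLab α i = true := by
  constructor
  · intro h
    have h2 := (hf.2 (f i) (by rw [hf.invol]; exact h)).2
    rwa [hf.invol] at h2
  · intro h
    rcases lt_trichotomy i (f i) with hh | hh | hh
    · rw [(hf.lab_false_iff i).mp hh] at h; exact absurd h (by simp)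
    · exact absurd hh.symm (hf.1.nofix i)
    · exact hh

lemma IsNC.nest (hf : IsNC α f) {i j : Fin (4 * n)} (h1 : i < f i) (h2 : i < j)
    (h3 : j < f i) : i < f j ∧ f j < f i := by
  rcases lt_trichotomy j (f j) with h | h | h
  · exact ⟨lt_trans h2 h, hf.1.noncross i j h1 h h2 h3⟩
  · exact absurd h.symm (hf.1.nofix j)
  · rcases lt_trichotomy (f j) i with hh | hh | hh
    · have h4 := hf.1.noncross (f j) i (by rw [hf.invol]; exact h) h1 hh
        (by rw [hf.invol]; exact h2)
      rw [hf.invol] at h4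
      exact absurd h3 (not_lt.mpr (le_of_lt h4))
    · exfalso
      have h5 := congrArg f hh
      rw [hf.invol] at h5
      exact absurd h5 (ne_of_lt h3)
    · exact ⟨hh, lt_trans h h3⟩

lemma IsNC.cross_nested (hf : IsNC α f) {a b : Fin (4 * n)} (ha : Cross f a)
    (hb : Cross f b) (hab : a < b) : f b < f a := by
  have h1 : a < f a := Fin.lt_def.mpr (lt_of_lt_of_le ha.1 ha.2)
  have h2 : b < f b := Fin.lt_def.mpr (lt_of_lt_of_le hb.1 hb.2)
  exact hf.1.noncross a b h1 h2 hab (Fin.lt_def.mpr (lt_of_lt_of_le hb.1 ha.2))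

end AuxMatching

section AuxUnique

variable {n : ℕ} {α : Seq n} {f : Fin (4 * n) → Fin (4 * n)}

lemma IsNC.unique (hf : IsNC α f) {h : Fin (4 * n) → Fin (4 * n)} (hh : IsNC α h) :
    f = h := by
  have key : ∀ d : ℕ, ∀ i : Fin (4 * n), i < f i → (f i).val - i.val ≤ d → h i = f i := by
    intro d
    induction d with
    | zero =>
      intro i h1 h2
      have := Fin.lt_def.mp h1
      omega
    | succ d ih =>
      intro i h1 h2
      have hint : ∀ j, i < j → j < f i → h j = f j := by
        intro j hj1 hj2
        obtain ⟨hl, hr⟩ := hf.nest h1 hj1 hj2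
        rcases lt_trichotomy j (f j) with hc | hc | hc
        · refine ih j hc ?_
          have := Fin.lt_def.mp hj2
          have := Fin.lt_def.mp hl
          have := Fin.lt_def.mp hr
          have := Fin.lt_def.mp hc
          omega
        · exact absurd hc.symm (hf.1.nofix j)
        · have hfj : f j < f (f j) := by rw [hf.invol]; exact hc
          have hrec : h (f j) = f (f j) := by
            refine ih (f j) hfj ?_
            rw [hf.invol]
            have := Fin.lt_def.mp hj2
            have := Fin.lt_def.mp hl
            have := Fin.lt_def.mp h1
            have := Fin.lt_def.mp hc
            omega
          have h5 : h (f (f j)) = f j := by rw [← hrec, hh.1.invol]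
          rwa [hf.invol] at h5
      have hlab : i < h i := by
        rw [hh.lab_false_iff]
        exact (hf.2 i h1).1
      have hnotint : ∀ j, i < j → j < f i → h i ≠ j := by
        intro j hj1 hj2 heq
        have h6 : h j = f j := hint j hj1 hj2
        have h7 : i = f j := by rw [← h6, ← heq, hh.1.invol]
        obtain ⟨hl, _⟩ := hf.nest h1 hj1 hj2
        rw [← h7] at hl
        exact lt_irrefl i hl
      have hge : f i ≤ h i := by
        by_contra hcon
        push_neg at hcon
        exact hnotint (h i) hlab hcon rfl
      rcases eq_or_lt_of_le hge with heq | hlt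
      · exact heq.symm
      · exfalso
        have hy : h (f i) < f i := by
          rw [hh.lab_true_iff]
          exact (hf.2 i h1).2
        have hyne : h (f i) ≠ i := by
          intro hc
          have := congrArg h hc
          rw [hh.1.invol] at this
          rw [this] at hlt
          exact lt_irrefl _ hlt
        have hyni : ¬ (i < h (f i)) := by
          intro hc
          have h8 : h (h (f i)) = f (h (f i)) := hint (h (f i)) hc hy
          rw [hh.1.invol] at h8
          have h9 := hf.finj h8
          rw [← h9] at hc
          exact lt_irrefl i hc
        have hylt : h (f i) < i := by
          rcases lt_trichotomy (h (f i)) i with hc | hc | hc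
          · exact hc
          · exact absurd hc hyne
          · exact absurd hc hyni
        have hna : h (f i) < h (h (f i)) := by rw [hh.1.invol]; exact hy
        have h10 := hh.1.noncross (h (f i)) i hna hlab hylt
          (by rw [hh.1.invol]; exact h1)
        rw [hh.1.invol] at h10
        exact absurd h10 (not_lt.mpr (le_of_lt hlt))
  funext i
  rcases lt_trichotomy i (f i) with hc | hc | hc
  · exact (key ((f i).val - i.val) i hc le_rfl).symm
  · exact absurd hc.symm (hf.1.nofix i)
  · have h1 : f i < f (f i) := by rw [hf.invol]; exact hc
    have h2 : h (f i) = f (f i) := key _ (f i) h1 le_rfl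
    rw [hf.invol] at h2
    have h3 := congrArg h h2
    rw [hh.1.invol] at h3
    exact h3

lemma mirror_lt_swap {n : ℕ} {i j : Fin (4 * n)} (h : i < mirror j) : j < mirror i := by
  have := mirror_lt_iff.mpr h
  rwa [mirror_mirror] at this

lemma IsNC.mirror_conj (hf : IsNC α f) : IsNC α (fun i => mirror (f (mirror i))) := by
  refine ⟨⟨?_, ?_, ?_⟩, ?_⟩
  · intro i
    simp only [mirror_mirror, hf.invol]
  · intro i hc
    have h2 := congrArg mirror hc
    rw [mirror_mirror] at h2
    exact hf.1.nofix (mirror i) h2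
  · intro a b ha hb hab hba
    have hu : f (mirror a) < mirror a := mirror_lt_swap ha
    have hv : f (mirror b) < mirror b := mirror_lt_swap hb
    have hyx : mirror b < mirror a := mirror_lt_iff.mpr hab
    have huy : f (mirror a) < mirror b := mirror_lt_swap hba
    refine mirror_lt_iff.mpr ?_
    rcases lt_trichotomy (f (mirror b)) (f (mirror a)) with hc | hc | hc
    · exfalso
      have h3 := hf.1.noncross (f (mirror b)) (f (mirror a))
        (by rw [hf.invol]; exact hv) (by rw [hf.invol]; exact hu) hc
        (by rw [hf.invol]; exact huy)
      rw [hf.invol, hf.invol] at h3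
      exact absurd hyx (not_lt.mpr (le_of_lt h3))
    · exfalso
      have h3 := hf.finj hc
      have h4 := congrArg mirror h3
      rw [mirror_mirror, mirror_mirror] at h4
      exact absurd h4 (ne_of_lt hab).symm
    · exact hc
  · intro i hlt
    have h1 : f (mirror i) < mirror i := mirror_lt_swap hlt
    have h2 : extLab α (mirror i) = true := (hf.lab_true_iff (mirror i)).mp h1
    have h3 : extLab α (f (mirror i)) = false := by
      rw [← hf.lab_false_iff]
      rw [hf.invol]
      exact h1
    constructor
    · rw [← mirror_mirror i, extLab_mirror, h2]
      rfl
    · rw [extLab_mirror, h3]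
      rfl

lemma IsNC.symm (hf : IsNC α f) (i : Fin (4 * n)) : f (mirror i) = mirror (f i) := by
  have h := hf.unique hf.mirror_conj
  have h2 := congrFun h i
  rw [h2, mirror_mirror]

end AuxUnique

section AuxCross

variable {n : ℕ} {α : Seq n} {f : Fin (4 * n) → Fin (4 * n)}

lemma cross_card_even (hf : IsNC α f) :
    Even ((Finset.univ.filter (fun a : Fin (4 * n) => Cross f a)).card) := by
  classical
  set L := Finset.univ.filter (fun i : Fin (4 * n) => i.val < 2 * n) with hL
  set A := Finset.univ.filter (fun i : Fin (4 * n) => i.val < 2 * n ∧ (f i).val < 2 * n)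
    with hA
  have hLcard : L.card = 2 * n := by
    apply Finset.card_eq_of_bijective (fun k hk => (⟨k, by omega⟩ : Fin (4 * n)))
    · intro a ha
      rw [hL, Finset.mem_filter] at ha
      exact ⟨a.val, ha.2, Fin.ext rfl⟩
    · intro k hk
      rw [hL, Finset.mem_filter]
      exact ⟨Finset.mem_univ _, hk⟩
    · intro i j hi hj hij
      exact congrArg Fin.val hij
  have hAeven : Even A.card := by
    apply even_card_invol A f
    · intro i hi
      rw [hA, Finset.mem_filter] at hi ⊢
      exact ⟨Finset.mem_univ _, hi.2.2, by rw [hf.invol]; exact hi.2.1⟩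
    · intro i _
      exact hf.invol i
    · intro i _
      exact hf.1.nofix i
  have hsub : A ⊆ L := by
    intro i hi
    rw [hA, Finset.mem_filter] at hi
    rw [hL, Finset.mem_filter]
    exact ⟨Finset.mem_univ _, hi.2.1⟩
  have hCeq : Finset.univ.filter (fun a : Fin (4 * n) => Cross f a) = L \ A := by
    ext i
    rw [Finset.mem_sdiff, hL, hA, Finset.mem_filter, Finset.mem_filter, Finset.mem_filter]
    unfold Cross
    constructor
    · rintro ⟨_, h1, h2⟩
      exact ⟨⟨Finset.mem_univ _, h1⟩, fun hc => by omega⟩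
    · rintro ⟨⟨_, h1⟩, h2⟩
      refine ⟨Finset.mem_univ _, h1, ?_⟩
      by_contra hc
      exact h2 ⟨Finset.mem_univ _, h1, by omega⟩
  rw [hCeq, Finset.card_sdiff_of_subset hsub, hLcard]
  obtain ⟨a, ha⟩ := hAeven
  have : A.card ≤ 2 * n := hLcard ▸ Finset.card_le_card hsub
  exact ⟨n - a, by omega⟩

lemma rank_eq (f : Fin (4 * n) → Fin (4 * n)) (a : Fin (4 * n)) :
    rank f a = (Finset.univ.filter (fun b => Cross f b ∧ a ≤ b)).card := by
  classical
  rw [rank, Set.ncard_eq_toFinset_card']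
  congr 1
  ext b
  simp

lemma rank_lt_of_lt (hf : IsNC α f) {a b : Fin (4 * n)} (ha : Cross f a) (hb : Cross f b)
    (hab : a < b) : rank f b < rank f a := by
  classical
  rw [rank_eq, rank_eq]
  apply Finset.card_lt_card
  constructor
  · intro c hc
    rw [Finset.mem_filter] at hc ⊢
    exact ⟨hc.1, hc.2.1, le_trans (le_of_lt hab) hc.2.2⟩
  · intro hc
    have h1 : a ∈ Finset.univ.filter (fun b => Cross f b ∧ a ≤ b) :=
      Finset.mem_filter.mpr ⟨Finset.mem_univ _, ha, le_refl a⟩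
    have h2 := hc h1
    rw [Finset.mem_filter] at h2
    exact absurd h2.2.2 (not_le.mpr hab)

lemma rank_pos {a : Fin (4 * n)} (ha : Cross f a) : 1 ≤ rank f a := by
  classical
  rw [rank_eq]
  rw [Nat.one_le_iff_ne_zero, ← Nat.pos_iff_ne_zero, Finset.card_pos]
  exact ⟨a, Finset.mem_filter.mpr ⟨Finset.mem_univ _, ha, le_refl a⟩⟩

lemma rank_le (f : Fin (4 * n) → Fin (4 * n)) (a : Fin (4 * n)) :
    rank f a ≤ (Finset.univ.filter (fun b : Fin (4 * n) => Cross f b)).card := by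
  classical
  rw [rank_eq]
  apply Finset.card_le_card
  intro c hc
  rw [Finset.mem_filter] at hc ⊢
  exact ⟨hc.1, hc.2.1⟩

lemma rank_surj (hf : IsNC α f) (k : ℕ) (h1 : 1 ≤ k)
    (h2 : k ≤ (Finset.univ.filter (fun b : Fin (4 * n) => Cross f b)).card) :
    ∃ a, Cross f a ∧ rank f a = k := by
  classical
  set C := Finset.univ.filter (fun b : Fin (4 * n) => Cross f b) with hC
  have hinj : Set.InjOn (rank f) C := by
    intro a ha b hb hab
    rw [Finset.mem_coe, hC, Finset.mem_filter] at ha hb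
    rcases lt_trichotomy a b with hc | hc | hc
    · exact absurd hab (ne_of_gt (rank_lt_of_lt hf ha.2 hb.2 hc))
    · exact hc
    · exact absurd hab (ne_of_lt (rank_lt_of_lt hf hb.2 ha.2 hc))
  have hsub : C.image (rank f) ⊆ Finset.Icc 1 C.card := by
    intro k hk
    rw [Finset.mem_image] at hk
    obtain ⟨a, ha, rfl⟩ := hk
    rw [hC, Finset.mem_filter] at ha
    exact Finset.mem_Icc.mpr ⟨rank_pos ha.2, rank_le f a⟩
  have hcard : (C.image (rank f)).card = C.card := Finset.card_image_of_injOn hinj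
  have heq : C.image (rank f) = Finset.Icc 1 C.card := by
    apply Finset.eq_of_subset_of_card_le hsub
    rw [hcard, Nat.card_Icc]
    omega
  have hk : k ∈ C.image (rank f) := by
    rw [heq, Finset.mem_Icc]
    exact ⟨h1, h2⟩
  rw [Finset.mem_image] at hk
  obtain ⟨a, ha, hrk⟩ := hk
  rw [hC, Finset.mem_filter] at ha
  exact ⟨a, ha.2, hrk⟩

lemma cross_fval (hf : IsNC α f) {a : Fin (4 * n)} (ha : Cross f a) : f a = mirror a := by
  have hfa := (f a).isLt
  have ha2 := ha.2
  have ha1 := ha.1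
  have hcross' : Cross f (mirror (f a)) := by
    constructor
    · rw [mirror_val]; omega
    · have h1 : f (mirror (f a)) = mirror a := by
        rw [hf.symm (f a), hf.invol]
      rw [h1, mirror_val]
      omega
  have hfval : (f (mirror (f a))).val = (mirror a).val := by
    rw [hf.symm (f a), hf.invol]
  rcases lt_trichotomy a (mirror (f a)) with hc | hc | hc
  · exfalso
    have h2 := hf.cross_nested ha hcross' hc
    have h3 := Fin.lt_def.mp h2
    have h4 := Fin.lt_def.mp hc
    rw [hfval, mirror_val] at h3
    rw [mirror_val] at h4
    omega
  · have := congrArg mirror hc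
    rw [mirror_mirror] at this
    exact this.symm
  · exfalso
    have h2 := hf.cross_nested hcross' ha hc
    have h3 := Fin.lt_def.mp h2
    have h4 := Fin.lt_def.mp hc
    rw [hfval, mirror_val] at h3
    rw [mirror_val] at h4
    omega

lemma cross_right_mirror (hf : IsNC α f) {y : Fin (4 * n)} (h1 : 2 * n ≤ y.val)
    (h2 : (f y).val < 2 * n) : f y = mirror y := by
  have hc : Cross f (f y) := ⟨h2, by rw [hf.invol]; exact h1⟩
  have h3 := cross_fval hf hc
  rw [hf.invol] at h3
  have := congrArg mirror h3
  rw [mirror_mirror] at this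
  exact this.symm

end AuxCross

section AuxCup

variable {n : ℕ} {α : Seq n}

lemma CupDiagram.g_pair (D : CupDiagram n α) {a : Fin (4 * n)} (ha : Cross D.f a) :
    ∃ b, Cross D.f b ∧ b ≠ a ∧ D.g a = D.f b ∧ D.g (D.f a) = b ∧ D.g b = D.f a ∧
      D.g (D.f b) = a ∧ (rank D.f b = rank D.f a + 1 ∨ rank D.f a = rank D.f b + 1) := by
  classical
  have hf := D.matching
  have hcard := cross_card_even hf
  have hle := rank_le D.f a
  have hpos := rank_pos (f := D.f) ha
  rcases Nat.even_or_odd (rank D.f a) with hpar | hpar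
  · -- even rank: partner has rank - 1
    have h2 : 2 ≤ rank D.f a := by
      rcases hpar with ⟨r, hr⟩
      omega
    obtain ⟨b, hb, hrb⟩ := rank_surj hf (rank D.f a - 1) (by omega) (by omega)
    have hodd : Odd (rank D.f b) := by
      rw [hrb]
      rcases hpar with ⟨r, hr⟩
      exact ⟨r - 1, by omega⟩
    have hlink := D.link b a hb ha hodd (by omega)
    exact ⟨b, hb, fun hc => by rw [hc] at hrb; omega, hlink.2.1, hlink.2.2.1, hlink.1,
      hlink.2.2.2, Or.inr (by omega)⟩
  · -- odd rank: partner has rank + 1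
    obtain ⟨c, hc⟩ := hcard
    have hlt : rank D.f a < (Finset.univ.filter (fun b : Fin (4 * n) => Cross D.f b)).card := by
      rcases hpar with ⟨r, hr⟩
      omega
    obtain ⟨b, hb, hrb⟩ := rank_surj hf (rank D.f a + 1) (by omega) (by omega)
    have hlink := D.link a b ha hb hpar hrb
    exact ⟨b, hb, fun hceq => by rw [hceq] at hrb; omega, hlink.1, hlink.2.2.2, hlink.2.1,
      hlink.2.2.1, Or.inl hrb⟩

lemma CupDiagram.pair_adjacent (D : CupDiagram n α) {a b : Fin (4 * n)}
    (ha : Cross D.f a) (hb : Cross D.f b)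
    (hr : rank D.f b = rank D.f a + 1 ∨ rank D.f a = rank D.f b + 1)
    {y : Fin (4 * n)} (h1 : 2 * n ≤ y.val) (h2 : (D.f y).val < 2 * n)
    (hbetween : min (D.f a).val (D.f b).val < y.val ∧ y.val < max (D.f a).val (D.f b).val) :
    False := by
  have hf := D.matching
  have hc : Cross D.f (D.f y) := ⟨h2, by rw [hf.invol]; exact h1⟩
  set c := D.f y with hcy
  have hfc : (D.f c).val = y.val := by rw [hcy, hf.invol]
  -- wlog: u is the lower-rank one
  have main : ∀ u v : Fin (4 * n), Cross D.f u → Cross D.f v → rank D.f v = rank D.f u + 1 →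
      (D.f u).val < y.val → y.val < (D.f v).val → False := by
    intro u v hu hv hruv hy1 hy2
    have hvu : v < u := by
      rcases lt_trichotomy u v with hq | hq | hq
      · have := rank_lt_of_lt hf hu hv hq
        omega
      · rw [hq] at hruv; omega
      · exact hq
    have hcu : u < c ∨ u = c ∨ c < u := lt_trichotomy u c
    have h3 : c < u := by
      rcases lt_trichotomy c u with hq | hq | hq
      · exact hq
      · exfalso; rw [hq] at hfc; omega
      · exfalso
        have := Fin.lt_def.mp (hf.cross_nested hu hc hq)
        omega
    have h4 : v < c := by
      rcases lt_trichotomy v c with hq | hq | hq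
      · exact hq
      · exfalso; rw [← hq] at hfc; omega
      · exfalso
        have := Fin.lt_def.mp (hf.cross_nested hc hv hq)
        omega
    have h5 := rank_lt_of_lt hf hc hu h3
    have h6 := rank_lt_of_lt hf hv hc h4
    omega
  rcases hr with hr | hr
  · -- rank b = rank a + 1, so b < a, f a < f b
    have hba : b < a := by
      rcases lt_trichotomy a b with hq | hq | hq
      · have := rank_lt_of_lt D.matching ha hb hq; omega
      · rw [hq] at hr; omega
      · exact hq
    have hfab := Fin.lt_def.mp (D.matching.cross_nested hb ha hba)
    rw [min_eq_left (le_of_lt hfab), max_eq_right (le_of_lt hfab)] at hbetween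
    exact main a b ha hb hr hbetween.1 hbetween.2
  · have hab : a < b := by
      rcases lt_trichotomy a b with hq | hq | hq
      · exact hq
      · rw [hq] at hr; omega
      · have := rank_lt_of_lt D.matching hb ha hq; omega
    have hfba := Fin.lt_def.mp (D.matching.cross_nested ha hb hab)
    rw [min_eq_right (le_of_lt hfba), max_eq_left (le_of_lt hfba)] at hbetween
    exact main b a hb ha hr hbetween.1 hbetween.2

end AuxCup

section AuxParity

lemma ncard_filter_eq {m : ℕ} (p : Fin m → Prop) [DecidablePred p] :
    {i : Fin m | p i}.ncard = (Finset.univ.filter p).card := by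
  classical
  rw [Set.ncard_eq_toFinset_card']
  congr 1
  ext b
  simp

lemma even_transfer {n : ℕ} (τ : Fin n → Fin n) (δ : Fin n → Bool)
    (hinv : ∀ i, τ (τ i) = i) (hdot : ∀ i, δ i = true → δ (τ i) = true) :
    (Even ({i : Fin n | (δ i || decide (τ i < i)) = true}.ncard) ↔
      Even ({i : Fin n | τ i = i ∧ δ i = true}.ncard
        + {i : Fin n | i < τ i ∧ δ i = false}.ncard)) := by
  classical
  rw [ncard_filter_eq, ncard_filter_eq, ncard_filter_eq]
  set S := Finset.univ.filter (fun i : Fin n => (δ i || decide (τ i < i)) = true) with hS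
  set Dfix := Finset.univ.filter (fun i : Fin n => τ i = i ∧ δ i = true) with hDfix
  set Dnf := Finset.univ.filter (fun i : Fin n => τ i ≠ i ∧ δ i = true) with hDnf
  set Uup := Finset.univ.filter (fun i : Fin n => τ i < i ∧ δ i = false) with hUup
  set Ulow := Finset.univ.filter (fun i : Fin n => i < τ i ∧ δ i = false) with hUlow
  have hdot' : ∀ i, δ (τ i) = true → δ i = true := by
    intro i h
    have := hdot (τ i) h
    rwa [hinv] at this
  have hcardS : S.card = Dfix.card + Dnf.card + Uup.card := by
    have hsplit : S = (Dfix ∪ Dnf) ∪ Uup := by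
      ext i
      simp only [hS, hDfix, hDnf, hUup, Finset.mem_union, Finset.mem_filter,
        Finset.mem_univ, true_and, Bool.or_eq_true, decide_eq_true_eq]
      constructor
      · rintro (h | h)
        · rcases eq_or_ne (τ i) i with he | he
          · exact Or.inl (Or.inl ⟨he, h⟩)
          · exact Or.inl (Or.inr ⟨he, h⟩)
        · rcases Bool.eq_false_or_eq_true (δ i) with hd | hd
          · rcases eq_or_ne (τ i) i with he | he
            · exact Or.inl (Or.inl ⟨he, hd⟩)
            · exact Or.inl (Or.inr ⟨he, hd⟩)
          · exact Or.inr ⟨h, hd⟩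
      · rintro ((⟨_, h⟩ | ⟨_, h⟩) | ⟨h, _⟩)
        · exact Or.inl h
        · exact Or.inl h
        · exact Or.inr h
    have hd1 : Disjoint Dfix Dnf := by
      simp only [Finset.disjoint_left, hDfix, hDnf, Finset.mem_filter]
      rintro i ⟨_, he, _⟩ ⟨_, hne, _⟩
      exact hne he
    have hd2 : Disjoint (Dfix ∪ Dnf) Uup := by
      simp only [Finset.disjoint_left, hDfix, hDnf, hUup, Finset.mem_union, Finset.mem_filter]
      rintro i (⟨_, _, hd⟩ | ⟨_, _, hd⟩) ⟨_, _, hd'⟩ <;> rw [hd] at hd' <;> exact absurd hd' (by simp)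
    rw [hsplit, Finset.card_union_of_disjoint hd2, Finset.card_union_of_disjoint hd1]
  have hDnfEven : Even Dnf.card := by
    apply even_card_invol Dnf τ
    · intro i hi
      rw [hDnf, Finset.mem_filter] at hi ⊢
      refine ⟨Finset.mem_univ _, ?_, hdot i hi.2.2⟩
      rw [hinv]
      exact fun hc => hi.2.1 hc.symm
    · intro i _; exact hinv i
    · intro i hi
      rw [hDnf, Finset.mem_filter] at hi
      intro hc
      exact hi.2.1 hc
  have hUcard : Uup.card = Ulow.card := by
    have himg : Uup = Ulow.image τ := by
      ext j
      simp only [hUup, hUlow, Finset.mem_filter, Finset.mem_image, Finset.mem_univ, true_and]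
      constructor
      · rintro ⟨hlt, hd⟩
        refine ⟨τ j, ⟨by rw [hinv]; exact hlt, ?_⟩, hinv j⟩
        rcases Bool.eq_false_or_eq_true (δ (τ j)) with h | h
        · rw [hdot' j h] at hd; exact absurd hd (by simp)
        · exact h
      · rintro ⟨i, ⟨hlt, hd⟩, rfl⟩
        refine ⟨by rw [hinv]; exact hlt, ?_⟩
        rcases Bool.eq_false_or_eq_true (δ (τ i)) with h | h
        · have h2 := hdot (τ i) h
          rw [hinv] at h2
          rw [h2] at hd
          exact absurd hd (by simp)
        · exact h
    rw [himg]
    apply Finset.card_image_of_injOn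
    intro a _ b _ hab
    have := congrArg τ hab
    rwa [hinv, hinv] at this
  obtain ⟨d, hd⟩ := hDnfEven
  constructor
  · rintro ⟨k, hk⟩
    exact ⟨k - d, by omega⟩
  · rintro ⟨k, hk⟩
    exact ⟨k + d, by omega⟩

end AuxParity

section AuxDC

variable {n : ℕ}

/-- Interior points of an undotted cup are matched inside it, by cups, undotted. -/
lemma cup_interior {D : RawDiag n} (hD : IsDecCup D) {a j : Fin n}
    (hcup : a < D.1 a) (hund : D.2 a = false) (hj1 : a < j) (hj2 : j < D.1 a) :
    (a < D.1 j ∧ D.1 j < D.1 a) ∧ D.1 j ≠ j ∧ D.2 j = false := by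
  obtain ⟨hinv, hnc, hne, hdp, hacc, -⟩ := hD
  have hnfix : D.1 j ≠ j := by
    intro hfix
    exact hne a j hcup hfix ⟨hj1, hj2⟩
  have hbounds : a < D.1 j ∧ D.1 j < D.1 a := by
    rcases lt_trichotomy j (D.1 j) with hc | hc | hc
    · exact ⟨lt_trans hj1 hc, hnc a j hcup hc hj1 hj2⟩
    · exact absurd hc.symm hnfix
    · have hne1 : D.1 j ≠ a := by
        intro hq
        have := congrArg D.1 hq
        rw [hinv] at this
        exact absurd this (ne_of_lt hj2)
      have hgt : a < D.1 j := by
        rcases lt_trichotomy (D.1 j) a with hq | hq | hq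
        · exfalso
          have h3 := hnc (D.1 j) a (by rw [hinv]; exact hc) hcup hq (by rw [hinv]; exact hj1)
          rw [hinv] at h3
          exact absurd hj2 (not_lt.mpr (le_of_lt h3))
        · exact absurd hq hne1
        · exact hq
      exact ⟨hgt, lt_trans hc hj2⟩
  refine ⟨hbounds, hnfix, ?_⟩
  by_contra hdd
  rw [Bool.not_eq_false] at hdd
  rcases lt_trichotomy j (D.1 j) with hc | hc | hc
  · exact (hacc j hdd (le_of_lt hc)).1 a hcup ⟨hj1, hnc a j hcup hc hj1 hj2⟩
  · exact absurd hc.symm hnfix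
  · have hdd' : D.2 (D.1 j) = true := hdp j hdd
    have hlow : D.1 j < D.1 (D.1 j) := by rw [hinv]; exact hc
    exact (hacc (D.1 j) hdd' (le_of_lt hlow)).1 a hcup
      ⟨hbounds.1, by rw [hinv]; exact hj2⟩

/-- No dotted point strictly inside a dotted cup. -/
lemma dot_inside {D : RawDiag n} (hD : IsDecCup D) {u c : Fin n}
    (hu : D.2 u = true) (huv : u < D.1 u) (hc : D.2 c = true)
    (h1 : u < c) (h2 : c < D.1 u) : False := by
  obtain ⟨hinv, hnc, hne, hdp, hacc, -⟩ := hD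
  rcases lt_trichotomy c (D.1 c) with hq | hq | hq
  · exact (hacc c hc (le_of_lt hq)).1 u huv ⟨h1, hnc u c huv hq h1 h2⟩
  · exact (hacc c hc (le_of_eq hq)).1 u huv ⟨h1, by rw [← hq]; exact h2⟩
  · have hc' : D.2 (D.1 c) = true := hdp c hc
    have hlow : D.1 c < D.1 (D.1 c) := by rw [hinv]; exact hq
    rcases lt_trichotomy (D.1 c) u with hw | hw | hw
    · have h3 := hnc (D.1 c) u hlow huv hw (by rw [hinv]; exact h1)
      rw [hinv] at h3
      exact absurd h2 (not_lt.mpr (le_of_lt h3))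
    · exfalso
      have h4 := congrArg D.1 hw
      rw [hinv] at h4
      rw [← h4] at h2
      exact lt_irrefl c h2
    · exact (hacc (D.1 c) hc' (le_of_lt hlow)).1 u huv
        ⟨hw, by rw [hinv]; exact h2⟩

/-- A dotted fixed point is the last dotted point. -/
lemma dot_fixed_last {D : RawDiag n} (hD : IsDecCup D) {u c : Fin n}
    (hu : D.2 u = true) (hufix : D.1 u = u) (hc : D.2 c = true) (h1 : u < c) : False := by
  have hD' := hD
  obtain ⟨hinv, hnc, hne, hdp, hacc, -⟩ := hD' 
  rcases le_or_gt c (D.1 c) with hq | hq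
  · exact (hacc c hc hq).2 u hufix h1
  · have hc' : D.2 (D.1 c) = true := hdp c hc
    have hlow : D.1 c < D.1 (D.1 c) := by rw [hinv]; exact hq
    rcases lt_trichotomy (D.1 c) u with hw | hw | hw
    · exact dot_inside hD hc' hlow hu hw (by rw [hinv]; exact h1)
    · have h4 := congrArg D.1 hw
      rw [hinv, hufix] at h4
      rw [h4] at h1
      exact lt_irrefl u h1
    · exact (hacc (D.1 c) hc' (le_of_lt hlow)).2 u hufix hw
end AuxDC

section AuxDC2

variable {n : ℕ}

lemma alpha_false {s : RawDiag n} {i : Fin n}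
    (h1 : s.2 i = false) (h2 : ¬ s.1 i < i) : (s.2 i || decide (s.1 i < i)) = false := by
  rw [h1]
  simp [h2]

lemma alpha_split {s : RawDiag n} {i : Fin n}
    (h : (s.2 i || decide (s.1 i < i)) = false) : s.2 i = false ∧ ¬ s.1 i < i := by
  rw [Bool.or_eq_false_iff] at h
  exact ⟨h.1, by simpa using h.2⟩

lemma alpha_true_or {s : RawDiag n} {i : Fin n}
    (h : (s.2 i || decide (s.1 i < i)) = true) : s.2 i = true ∨ s.1 i < i := by
  rw [Bool.or_eq_true] at h
  rcases h with h | h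
  · exact Or.inl h
  · exact Or.inr (by simpa using h)

lemma cups_agree {s t : RawDiag n} (hs : IsDecCup s) (ht : IsDecCup t)
    (h : ∀ i, (s.2 i || decide (s.1 i < i)) = (t.2 i || decide (t.1 i < i))) :
    ∀ a, a < s.1 a → s.2 a = false → t.1 a = s.1 a ∧ t.2 a = false := by
  have hs' := hs; have ht' := ht
  obtain ⟨hsinv, hsnc, hsne, hsdp, hsacc, -⟩ := hs'
  obtain ⟨htinv, htnc, htne, htdp, htacc, -⟩ := ht'
  suffices key : ∀ d : ℕ, ∀ a, a < s.1 a → s.2 a = false → (s.1 a).val - a.val ≤ d →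
      t.1 a = s.1 a ∧ t.2 a = false by
    intro a h1 h2
    exact key ((s.1 a).val - a.val) a h1 h2 le_rfl
  intro d
  induction d with
  | zero =>
    intro a h1 h2 h3
    have := Fin.lt_def.mp h1
    omega
  | succ d ih =>
    intro a hcup hund hlen
    set b := s.1 a with hb
    have hba : s.1 b = a := by rw [hb, hsinv]
    have hbδ : s.2 b = false := by
      by_contra hc
      rw [Bool.not_eq_false] at hc
      have h4 := hsdp b hc
      rw [hba, hund] at h4
      exact absurd h4 (by simp)
    have hint : ∀ j, a < j → j < b → t.1 j = s.1 j ∧ (a < s.1 j ∧ s.1 j < b) ∧ t.2 j = false := by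
      intro j hj1 hj2
      obtain ⟨hbnd, hnfix, hjδ⟩ := cup_interior hs hcup hund hj1 hj2
      rcases lt_trichotomy j (s.1 j) with hq | hq | hq
      · have hres := ih j hq hjδ (by
          have := Fin.lt_def.mp hbnd.2
          have := Fin.lt_def.mp hj1
          have := Fin.lt_def.mp hq
          omega)
        exact ⟨hres.1, hbnd, hres.2⟩
      · exact absurd hq.symm hnfix
      · obtain ⟨hbnd', hnfix', hjδ'⟩ := cup_interior hs hcup hund hbnd.1 hbnd.2
        have hlow : s.1 j < s.1 (s.1 j) := by rw [hsinv]; exact hq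
        have hres := ih (s.1 j) hlow hjδ' (by
          rw [hsinv]
          have := Fin.lt_def.mp hbnd.1
          have := Fin.lt_def.mp hj2
          have := Fin.lt_def.mp hq
          omega)
        rw [hsinv] at hres
        have ht1 : t.1 j = s.1 j := by
          have h4 := congrArg t.1 hres.1
          rw [htinv] at h4
          exact h4.symm
        refine ⟨ht1, hbnd, ?_⟩
        by_contra hc
        rw [Bool.not_eq_false] at hc
        have h5 := htdp j hc
        rw [ht1, hres.2] at h5
        exact absurd h5 (by simp)
    have hαa : t.2 a = false ∧ ¬ t.1 a < a := by
      have h1 := h a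
      rw [alpha_false hund (not_lt.mpr (le_of_lt hcup))] at h1
      exact alpha_split h1.symm
    have hαb : t.2 b = true ∨ t.1 b < b := by
      have h1 := h b
      have h2 : (s.2 b || decide (s.1 b < b)) = true := by
        rw [hbδ, hba]
        simp [hcup]
      rw [h2] at h1
      exact alpha_true_or h1.symm
    have hab : a < b := hcup
    have hni : ∀ j, a < j → j < b → t.1 a ≠ j := by
      intro j hj1 hj2 heq
      obtain ⟨ht1, hbnd, -⟩ := hint j hj1 hj2
      have h4 : t.1 j = a := by rw [← heq, htinv]
      rw [ht1] at h4
      rw [h4] at hbnd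
      exact lt_irrefl a hbnd.1
    rcases lt_trichotomy (t.1 a) b with hq | hq | hq
    · exfalso
      have hfix : t.1 a = a := by
        rcases lt_trichotomy (t.1 a) a with hw | hw | hw
        · exact absurd hw hαa.2
        · exact hw
        · exact absurd rfl (hni (t.1 a) hw hq)
      rcases lt_or_ge (t.1 b) b with hq2 | hq2
      · have hclt : t.1 b < a := by
          rcases lt_trichotomy (t.1 b) a with hw | hw | hw
          · exact hw
          · exfalso
            have h4 := congrArg t.1 hw
            rw [htinv, hfix] at h4
            rw [h4] at hab
            exact lt_irrefl a hab
          · exfalso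
            obtain ⟨ht1, hbnd, -⟩ := hint (t.1 b) hw hq2
            have h8 : t.1 (t.1 b) = b := htinv b
            rw [ht1] at h8
            rw [h8] at hbnd
            exact lt_irrefl b hbnd.2
        exact htne (t.1 b) a (by rw [htinv]; exact hq2) hfix ⟨hclt, by rw [htinv]; exact hab⟩
      · have hdb : t.2 b = true := by
          rcases hαb with h5 | h5
          · exact h5
          · exact absurd h5 (not_lt.mpr hq2)
        exact (htacc b hdb hq2).2 a hfix hab
    · exact ⟨hq, hαa.1⟩
    · exfalso
      have hacup : a < t.1 a := lt_trans hab hq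
      rcases lt_or_ge (t.1 b) b with hq2 | hq2
      · have hclt : t.1 b < a := by
          rcases lt_trichotomy (t.1 b) a with hw | hw | hw
          · exact hw
          · exfalso
            have h4 := congrArg t.1 hw
            rw [htinv] at h4
            rw [← h4] at hq
            exact lt_irrefl b hq
          · exfalso
            obtain ⟨ht1, hbnd, -⟩ := hint (t.1 b) hw hq2
            have h8 : t.1 (t.1 b) = b := htinv b
            rw [ht1] at h8
            rw [h8] at hbnd
            exact lt_irrefl b hbnd.2
        have h5 := htnc (t.1 b) a (by rw [htinv]; exact hq2) hacup hclt (by rw [htinv]; exact hab)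
        rw [htinv] at h5
        exact absurd hq (not_lt.mpr (le_of_lt h5))
      · have hdb : t.2 b = true := by
          rcases hαb with h5 | h5
          · exact h5
          · exact absurd h5 (not_lt.mpr hq2)
        apply (htacc b hdb hq2).1 a hacup
        refine ⟨hab, ?_⟩
        rcases eq_or_lt_of_le hq2 with h7 | h7
        · rw [← h7]; exact hq
        · exact htnc a b hacup h7 hab hq

lemma dc_unique {s t : RawDiag n} (hs : IsDecCup s) (ht : IsDecCup t)
    (h : ∀ i, (s.2 i || decide (s.1 i < i)) = (t.2 i || decide (t.1 i < i))) : s = t := by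
  have hs' := hs; have ht' := ht
  obtain ⟨hsinv, hsnc, hsne, hsdp, hsacc, -⟩ := hs'
  obtain ⟨htinv, htnc, htne, htdp, htacc, -⟩ := ht'
  have h' : ∀ i, (t.2 i || decide (t.1 i < i)) = (s.2 i || decide (s.1 i < i)) :=
    fun i => (h i).symm
  have cst := cups_agree hs ht h
  have cts := cups_agree ht hs h'
  -- dots agree
  have hδ1 : ∀ i, s.2 i = true → t.2 i = true := by
    intro i hd
    by_contra hc
    rw [Bool.not_eq_true] at hc
    have h1 := h i
    rw [hd] at h1
    simp only [Bool.true_or] at h1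
    rcases alpha_true_or h1.symm with h2 | h2
    · rw [h2] at hc; exact absurd hc (by simp)
    · -- i is a t-cup upper endpoint
      have hlow : t.1 i < t.1 (t.1 i) := by rw [htinv]; exact h2
      have hund : t.2 (t.1 i) = false := by
        by_contra hc2
        rw [Bool.not_eq_false] at hc2
        have h3 := htdp (t.1 i) hc2
        rw [htinv, hc] at h3
        exact absurd h3 (by simp)
      obtain ⟨h4, h5⟩ := cts (t.1 i) hlow hund
      rw [htinv] at h4
      -- s.1 (t.1 i) = i, so s.1 i = t.1 i
      have h6 := congrArg s.1 h4
      rw [hsinv] at h6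
      have h7 := hsdp i hd
      rw [← h6, h5] at h7
      exact absurd h7 (by simp)
  have hδ2 : ∀ i, t.2 i = true → s.2 i = true := by
    intro i hd
    by_contra hc
    rw [Bool.not_eq_true] at hc
    have h1 := h' i
    rw [hd] at h1
    simp only [Bool.true_or] at h1
    rcases alpha_true_or h1.symm with h2 | h2
    · rw [h2] at hc; exact absurd hc (by simp)
    · have hlow : s.1 i < s.1 (s.1 i) := by rw [hsinv]; exact h2
      have hund : s.2 (s.1 i) = false := by
        by_contra hc2
        rw [Bool.not_eq_false] at hc2
        have h3 := hsdp (s.1 i) hc2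
        rw [hsinv, hc] at h3
        exact absurd h3 (by simp)
      obtain ⟨h4, h5⟩ := cst (s.1 i) hlow hund
      rw [hsinv] at h4
      have h6 := congrArg t.1 h4
      rw [htinv] at h6
      have h7 := htdp i hd
      rw [← h6, h5] at h7
      exact absurd h7 (by simp)
  have hδ : ∀ i, s.2 i = t.2 i := by
    intro i
    rcases Bool.eq_false_or_eq_true (t.2 i) with h1 | h1
    · rcases Bool.eq_false_or_eq_true (s.2 i) with h2 | h2
      · rw [h1, h2]
      · rw [hδ2 i h1] at h2
        exact absurd h2 (by simp)
    · rcases Bool.eq_false_or_eq_true (s.2 i) with h2 | h2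
      · rw [hδ1 i h2] at h1
        exact absurd h1 (by simp)
      · rw [h1, h2]
  -- dotted points pair consecutively, hence agree
  have hdotpair : ∀ m : ℕ, ∀ i : Fin n, i.val < m → s.2 i = true → s.1 i = t.1 i := by
    intro m
    induction m with
    | zero => intro i h1; omega
    | succ m ih =>
      intro i him hdot
      have htdot : t.2 i = true := hδ1 i hdot
      rcases lt_trichotomy (s.1 i) i with hA | hB | hC
      · -- upper in s
        have hvdot : s.2 (s.1 i) = true := hsdp i hdot
        have hres := ih (s.1 i) (by
          have := Fin.lt_def.mp hA
          omega) hvdot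
        rw [hsinv] at hres
        have h4 := congrArg t.1 hres
        rw [htinv] at h4
        exact h4.symm
      · -- fixed in s
        rcases lt_trichotomy (t.1 i) i with hq | hq | hq
        · have hvdot : t.2 (t.1 i) = true := htdp i htdot
          have hsvdot : s.2 (t.1 i) = true := hδ2 (t.1 i) hvdot
          have hres := ih (t.1 i) (by
            have := Fin.lt_def.mp hq
            omega) hsvdot
          rw [htinv] at hres
          -- s.1 (t.1 i) = i, so s.1 i = t.1 i < i contradicting hB
          have h4 := congrArg s.1 hres
          rw [hsinv] at h4
          rw [h4, hB] at hq
          exact absurd hq (lt_irrefl i)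
        · rw [hB, hq]
        · exfalso
          have hvdot : t.2 (t.1 i) = true := htdp i htdot
          have hsvdot : s.2 (t.1 i) = true := hδ2 (t.1 i) hvdot
          exact dot_fixed_last hs hdot hB hsvdot hq
      · -- lower in s
        rcases lt_trichotomy (t.1 i) i with hq | hq | hq
        · exfalso
          have hvdot : t.2 (t.1 i) = true := htdp i htdot
          have hsvdot : s.2 (t.1 i) = true := hδ2 (t.1 i) hvdot
          have hres := ih (t.1 i) (by
            have := Fin.lt_def.mp hq
            omega) hsvdot
          rw [htinv] at hres
          have h4 := congrArg s.1 hres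
          rw [hsinv] at h4
          -- s.1 i = t.1 i < i contradicting hC
          rw [h4] at hq
          exact absurd hC (not_lt.mpr (le_of_lt hq))
        · exfalso
          have hsdot' : s.2 (s.1 i) = true := hsdp i hdot
          have htdot' : t.2 (s.1 i) = true := hδ1 (s.1 i) hsdot'
          exact dot_fixed_last ht htdot hq htdot' hC
        · -- lower in both
          rcases lt_trichotomy (s.1 i) (t.1 i) with hw | hw | hw
          · exfalso
            have hsdot' : s.2 (s.1 i) = true := hsdp i hdot
            have htdot' : t.2 (s.1 i) = true := hδ1 (s.1 i) hsdot'
            exact dot_inside ht htdot hq htdot' hC hw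
          · exact hw
          · exfalso
            have htdot' : t.2 (t.1 i) = true := htdp i htdot
            have hsdot' : s.2 (t.1 i) = true := hδ2 (t.1 i) htdot'
            exact dot_inside hs hdot hC hsdot' hq hw
  have hτ : ∀ i, s.1 i = t.1 i := by
    intro i
    rcases Bool.eq_false_or_eq_true (s.2 i) with h1 | h1
    · exact hdotpair n i i.isLt h1
    · rcases lt_trichotomy i (s.1 i) with hq | hq | hq
      · exact ((cst i hq h1).1).symm
      · -- fixed undotted in s
        have h2 := h i
        rw [alpha_false h1 (by rw [← hq]; exact lt_irrefl i)] at h2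
        obtain ⟨h3, h4⟩ := alpha_split h2.symm
        rcases lt_trichotomy i (t.1 i) with hw | hw | hw
        · exfalso
          obtain ⟨h5, -⟩ := cts i hw h3
          rw [← h5] at hw
          rw [← hq] at hw
          exact lt_irrefl _ hw
        · rw [← hq, ← hw]
        · exact absurd hw h4
      · -- upper undotted in s
        have hund : s.2 (s.1 i) = false := by
          by_contra hc
          rw [Bool.not_eq_false] at hc
          have h3 := hsdp (s.1 i) hc
          rw [hsinv, h1] at h3
          exact absurd h3 (by simp)
        have hlow : s.1 i < s.1 (s.1 i) := by rw [hsinv]; exact hq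
        obtain ⟨h4, -⟩ := cst (s.1 i) hlow hund
        rw [hsinv] at h4
        have h5 := congrArg t.1 h4
        rw [htinv] at h5
        exact h5
  have hfst : s.1 = t.1 := funext hτ
  have hsnd : s.2 = t.2 := funext hδ
  exact Prod.ext hfst hsnd

end AuxDC2

section CutHelpers

variable {n : ℕ} {α : Seq n}

/-- The point of the big diagram corresponding to point `i` of the cut diagram. -/
def pt {n : ℕ} (i : Fin n) : Fin (4 * n) := ⟨2 * n + i.val, by have := i.isLt; omega⟩

@[simp] lemma pt_val (i : Fin n) : (pt i).val = 2 * n + i.val := rfl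

lemma extLab_pt' (α : Seq n) (i : Fin n) : extLab α (pt i) = α i := by
  rw [extLab_pt (by simp) (by have := i.isLt; simp; omega)]
  congr 1
  exact Fin.ext (by simp)

lemma CupDiagram.g_eq_f (D : CupDiagram n α) {p : Fin (4 * n)}
    (hp : 2 * n ≤ p.val) (hfp : 2 * n ≤ (D.f p).val) : D.g p = D.f p := by
  apply D.agree
  · intro hc; exact absurd hc.1 (by omega)
  · intro hc; exact absurd hc.1 (by omega)

lemma CupDiagram.dot_analysis (D : CupDiagram n α) {p : Fin (4 * n)}
    (hp : 2 * n ≤ p.val) (hfp : (D.f p).val < 2 * n) :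
    ∃ b, Cross D.f b ∧ D.g p = b ∧ D.g (D.f b) = D.f p ∧ 2 * n ≤ (D.f b).val ∧
      D.f b ≠ p ∧
      (∀ y : Fin (4 * n), 2 * n ≤ y.val → (D.f y).val < 2 * n →
        ¬(min p.val (D.f b).val < y.val ∧ y.val < max p.val (D.f b).val)) := by
  have hf := D.matching
  have ha : Cross D.f (D.f p) := ⟨hfp, by rw [hf.invol]; exact hp⟩
  obtain ⟨b, hb, hbne, h1, h2, h3, h4, h5⟩ := D.g_pair ha
  refine ⟨b, hb, ?_, h4, hb.2, ?_, ?_⟩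
  · rw [hf.invol] at h2
    exact h2
  · intro hc
    have h6 := congrArg D.f hc
    rw [hf.invol] at h6
    exact hbne h6
  · intro y hy1 hy2 hbet
    refine D.pair_adjacent ha hb h5 hy1 hy2 ?_
    rw [← hf.invol p] at hbet
    exact hbet

lemma dot_gap_closed {f : Fin (4 * n) → Fin (4 * n)} (hf : IsNC α f)
    {p x r : Fin (4 * n)}
    (hp : 2 * n ≤ p.val) (hfp : (f p).val < 2 * n) (hx : 2 * n ≤ x.val)
    (hfx : (f x).val < 2 * n) (hnb : ¬ ((f r).val < 2 * n))
    (hr1 : min p.val x.val < r.val) (hr2 : r.val < max p.val x.val) :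
    min p.val x.val < (f r).val ∧ (f r).val < max p.val x.val := by
  have hinv := hf.invol
  have main : ∀ lo hi : Fin (4 * n), 2 * n ≤ lo.val → (f lo).val < 2 * n →
      (f hi).val < 2 * n → lo.val < r.val → r.val < hi.val →
      lo.val < (f r).val ∧ (f r).val < hi.val := by
    intro lo hi hlo hflo hfhi hrlo hrhi
    have hfr2 : 2 * n ≤ (f r).val := by omega
    rcases Nat.lt_or_ge r.val (f r).val with hc | hc
    · have hne : f r ≠ hi := by
        intro hq
        have h6 := congrArg f hq
        rw [hinv] at h6
        have h7 := congrArg Fin.val h6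
        omega
      rcases Nat.lt_or_ge (f r).val hi.val with hq | hq
      · exact ⟨by omega, hq⟩
      · exfalso
        have hq' : hi.val < (f r).val :=
          lt_of_le_of_ne hq (fun h => hne (Fin.ext h.symm))
        have h5 := hf.1.noncross (f hi) r
          (by rw [hinv]; exact Fin.lt_def.mpr (by omega))
          (Fin.lt_def.mpr hc)
          (Fin.lt_def.mpr (by omega))
          (by rw [hinv]; exact Fin.lt_def.mpr hrhi)
        rw [hinv] at h5
        have := Fin.lt_def.mp h5
        omega
    · have hcs : (f r).val < r.val := by
        rcases Nat.eq_or_lt_of_le hc with hq | hq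
        · exact absurd (Fin.ext hq : f r = r) (hf.1.nofix r)
        · exact hq
      have hgt : lo.val < (f r).val := by
        rcases Nat.lt_or_ge lo.val (f r).val with hq | hq
        · exact hq
        · exfalso
          have hne : f r ≠ lo := by
            intro hq2
            have h6 := congrArg f hq2
            rw [hinv] at h6
            have h7 := congrArg Fin.val h6
            omega
          have hq' : (f r).val < lo.val :=
            lt_of_le_of_ne hq (fun h => hne (Fin.ext h))
          have h5 := hf.1.noncross (f lo) (f r)
            (by rw [hinv]; exact Fin.lt_def.mpr (by omega))
            (by rw [hinv]; exact Fin.lt_def.mpr hcs)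
            (Fin.lt_def.mpr (by omega))
            (by rw [hinv]; exact Fin.lt_def.mpr hq')
          rw [hinv, hinv] at h5
          have := Fin.lt_def.mp h5
          omega
      exact ⟨hgt, by omega⟩
  rcases le_or_gt p.val x.val with h | h
  · have hres := main p x hp hfp hfx (by omega) (by omega)
    exact ⟨by omega, by omega⟩
  · have hres := main x p hx hfx hfp (by omega) (by omega)
    exact ⟨by omega, by omega⟩

end CutHelpers

section CutMain

lemma cut_main {n : ℕ} {α : Seq n} (hα : EvenMinus α) (D : CupDiagram n α) (t : RawDiag n)
    (ht : ∀ i : Fin n,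
      (2 * n ≤ (D.g (pt i)).val ∧ (D.g (pt i)).val < 3 * n →
        (t.1 i).val + 2 * n = (D.g (pt i)).val ∧ t.2 i = false) ∧
      (3 * n ≤ (D.g (pt i)).val → t.1 i = i ∧ t.2 i = false) ∧
      ((D.g (pt i)).val < 2 * n → t.2 i = true ∧
        (2 * n ≤ (mirror (D.g (pt i))).val ∧ (mirror (D.g (pt i))).val < 3 * n →
          (t.1 i).val + 2 * n = (mirror (D.g (pt i))).val) ∧
        (3 * n ≤ (mirror (D.g (pt i))).val → t.1 i = i))) :
    IsDecCup t ∧ ∀ i : Fin n, α i = (t.2 i || decide (t.1 i < i)) := by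
  have hf := D.matching
  have hinvol := hf.invol
  -- master classification of the cut at each point
  have hmain : ∀ i : Fin n,
      (t.2 i = false ∧ (t.1 i).val + 2 * n = (D.f (pt i)).val ∧ 2 * n ≤ (D.f (pt i)).val ∧
        (D.f (pt i)).val < 3 * n) ∨
      (t.2 i = false ∧ t.1 i = i ∧ 3 * n ≤ (D.f (pt i)).val) ∨
      (t.2 i = true ∧ (D.f (pt i)).val < 2 * n ∧
        ∃ b, D.g (pt i) = b ∧ Cross D.f b ∧ D.g (D.f b) = D.f (pt i) ∧
          2 * n ≤ (D.f b).val ∧ D.f b ≠ pt i ∧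
          ((D.f b).val < 3 * n → (t.1 i).val + 2 * n = (D.f b).val) ∧
          (3 * n ≤ (D.f b).val → t.1 i = i) ∧
          (∀ y : Fin (4 * n), 2 * n ≤ y.val → (D.f y).val < 2 * n →
            ¬(min (pt i).val (D.f b).val < y.val ∧
              y.val < max (pt i).val (D.f b).val))) := by
    intro i
    have hti := ht i
    have hival := i.isLt
    have hfval := (D.f (pt i)).isLt
    rcases Nat.lt_or_ge (D.f (pt i)).val (2 * n) with hc | hc
    · obtain ⟨b, hb, hgb, hgfb, hfb2, hfbne, hadj⟩ := D.dot_analysis (by simp) hc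
      right; right
      have hcval : (D.g (pt i)).val < 2 * n := by rw [hgb]; exact hb.1
      obtain ⟨ht2, hcup', hedge'⟩ := hti.2.2 hcval
      have hmb : mirror (D.g (pt i)) = D.f b := by
        rw [hgb]
        exact (cross_fval hf hb).symm
      rw [hmb] at hcup' hedge'
      exact ⟨ht2, hc, b, hgb, hb, hgfb, hfb2, hfbne,
        fun h => hcup' ⟨hfb2, h⟩, hedge', hadj⟩
    · rcases Nat.lt_or_ge (D.f (pt i)).val (3 * n) with hc2 | hc2
      · left
        have hg := D.g_eq_f (p := pt i) (by simp) hc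
        obtain ⟨h1, h2⟩ := hti.1 (by rw [hg]; exact ⟨hc, hc2⟩)
        rw [hg] at h1
        exact ⟨h2, h1, hc, hc2⟩
      · right; left
        have hg := D.g_eq_f (p := pt i) (by simp) (by omega)
        obtain ⟨h1, h2⟩ := hti.2.1 (by rw [hg]; exact hc2)
        exact ⟨h2, h1, hc2⟩
  have hnfix : ∀ i : Fin n, (D.f (pt i)).val ≠ (pt i).val :=
    fun i h => hf.1.nofix (pt i) (Fin.ext h)
  -- classification of points with a "low" partner in the cut
  have hlow : ∀ a : Fin n, a < t.1 a →
      (t.2 a = false ∧ (D.f (pt a)).val = 2 * n + (t.1 a).val ∧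
        2 * n ≤ (D.f (pt a)).val ∧ (D.f (pt a)).val < 3 * n) ∨
      (t.2 a = true ∧ (D.f (pt a)).val < 2 * n ∧
        ∃ b, D.g (pt a) = b ∧ Cross D.f b ∧ D.g (D.f b) = D.f (pt a) ∧
          (D.f b).val = 2 * n + (t.1 a).val ∧ (D.f b).val < 3 * n ∧
          (∀ y : Fin (4 * n), 2 * n ≤ y.val → (D.f y).val < 2 * n →
            ¬(min (pt a).val (D.f b).val < y.val ∧
              y.val < max (pt a).val (D.f b).val))) := by
    intro a ha
    have haval := Fin.lt_def.mp ha
    rcases hmain a with ⟨h1, h2, h3, h4⟩ | ⟨h1, h2, h3⟩ | ⟨h1, h2, b, hgb, hb, hgfb, hfb2, hfbne, hcup', hedge', hadj⟩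
    · exact Or.inl ⟨h1, by omega, h3, h4⟩
    · rw [h2] at ha; exact absurd ha (lt_irrefl a)
    · right
      have hxlt : (D.f b).val < 3 * n := by
        rcases Nat.lt_or_ge (D.f b).val (3 * n) with hq | hq
        · exact hq
        · rw [hedge' hq] at ha; exact absurd ha (lt_irrefl a)
      have hval := hcup' hxlt
      exact ⟨h1, h2, b, hgb, hb, hgfb, by omega, hxlt, hadj⟩
  -- classification of fixed points of the cut
  have hfix : ∀ e : Fin n, t.1 e = e →
      (3 * n ≤ (D.f (pt e)).val) ∨
      ((D.f (pt e)).val < 2 * n ∧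
        ∃ b, D.g (pt e) = b ∧ Cross D.f b ∧ 3 * n ≤ (D.f b).val ∧
          (∀ y : Fin (4 * n), 2 * n ≤ y.val → (D.f y).val < 2 * n →
            ¬(min (pt e).val (D.f b).val < y.val ∧
              y.val < max (pt e).val (D.f b).val))) := by
    intro e he
    rcases hmain e with ⟨h1, h2, h3, h4⟩ | ⟨h1, h2, h3⟩ | ⟨h1, h2, b, hgb, hb, hgfb, hfb2, hfbne, hcup', hedge', hadj⟩
    · exfalso
      apply hnfix e
      rw [← h2, he]
      simp
      omega
    · exact Or.inl h3
    · right
      refine ⟨h2, b, hgb, hb, ?_, hadj⟩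
      rcases Nat.lt_or_ge (D.f b).val (3 * n) with hq | hq
      · exfalso
        apply hfbne
        have h5 := hcup' hq
        rw [he] at h5
        apply Fin.ext
        simp
        omega
      · exact hq
  -- first condition: involution
  have hc1 : ∀ i, t.1 (t.1 i) = i := by
    intro i
    have hival := i.isLt
    rcases hmain i with ⟨h1, h2, h3, h4⟩ | ⟨h1, h2, h3⟩ | ⟨h1, h2, b, hgb, hb, hgfb, hfb2, hfbne, hcup', hedge', hadj⟩
    · have hpj : pt (t.1 i) = D.f (pt i) := Fin.ext (by simp; omega)
      have hfj : (D.f (pt (t.1 i))).val = (pt i).val := by rw [hpj, hinvol]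
      have hfjval : (D.f (pt (t.1 i))).val = 2 * n + i.val := by rw [hfj]; simp
      rcases hmain (t.1 i) with ⟨g1, g2, g3, g4⟩ | ⟨g1, g2, g3⟩ | ⟨g1, g2, -⟩
      · apply Fin.ext
        omega
      · exfalso; omega
      · exfalso; omega
    · rw [h2, h2]
    · rcases Nat.lt_or_ge (D.f b).val (3 * n) with hq | hq
      · have hval := hcup' hq
        have hpj : pt (t.1 i) = D.f b := Fin.ext (by simp; omega)
        have hbval := hb.1
        have hfj : (D.f (pt (t.1 i))).val = b.val := by rw [hpj, hinvol]
        rcases hmain (t.1 i) with ⟨g1, g2, g3, g4⟩ | ⟨g1, g2, g3⟩ | ⟨g1, g2, b', hgb', hb', hgfb', hfb2', hfbne', hcup'', hedge'', hadj'⟩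
        · exfalso; omega
        · exfalso; omega
        · have hgj : D.g (pt (t.1 i)) = D.f (pt i) := by rw [hpj]; exact hgfb
          have hb'eq : b' = D.f (pt i) := hgb'.symm.trans hgj
          have hxj : (D.f b').val = (pt i).val := by rw [hb'eq, hinvol]
          have hxjval : (D.f b').val = 2 * n + i.val := by rw [hxj]; simp
          have := hcup'' (by omega)
          apply Fin.ext
          omega
      · rw [hedge' hq, hedge' hq]
  -- fourth condition: dots propagate along arcs
  have hc4 : ∀ i, t.2 i = true → t.2 (t.1 i) = true := by
    intro i hd
    rcases hmain i with ⟨h1, -⟩ | ⟨h1, -⟩ | ⟨h1, h2, b, hgb, hb, hgfb, hfb2, hfbne, hcup', hedge', hadj⟩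
    · rw [h1] at hd; exact absurd hd (by simp)
    · rw [h1] at hd; exact absurd hd (by simp)
    · have hival := i.isLt
      rcases Nat.lt_or_ge (D.f b).val (3 * n) with hq | hq
      · have hval := hcup' hq
        have hpj : pt (t.1 i) = D.f b := Fin.ext (by simp; omega)
        have hbval := hb.1
        have hfj : (D.f (pt (t.1 i))).val = b.val := by rw [hpj, hinvol]
        rcases hmain (t.1 i) with ⟨-, -, g3, -⟩ | ⟨-, -, g3⟩ | ⟨g1, -⟩
        · exfalso; omega
        · exfalso; omega
        · exact g1
      · rw [hedge' hq]; exact hd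
  -- second condition: cups do not cross
  have hc2 : ∀ a b : Fin n, a < t.1 a → b < t.1 b → a < b → b < t.1 a → t.1 b < t.1 a := by
    intro a b ha hb hab hba
    have haval := Fin.lt_def.mp ha
    have hbval := Fin.lt_def.mp hb
    have habval := Fin.lt_def.mp hab
    have hbaval := Fin.lt_def.mp hba
    rcases hlow a ha with ⟨ha1, ha2, ha3, ha4⟩ | ⟨ha1, ha2, ba, hgba, hba', hgfba, hxa, hxa3, hadja⟩
    · rcases hlow b hb with ⟨hb1, hb2, hb3, hb4⟩ | ⟨hb1, hb2, bb, hgbb, hbb', hgfbb, hxb, hxb3, hadjb⟩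
      · -- both undotted cups: noncrossing of f
        have h5 := hf.1.noncross (pt a) (pt b)
          (Fin.lt_def.mpr (by simp; omega))
          (Fin.lt_def.mpr (by simp; omega))
          (Fin.lt_def.mpr (by simp; omega))
          (Fin.lt_def.mpr (by simp; omega))
        have h6 := Fin.lt_def.mp h5
        exact Fin.lt_def.mpr (by omega)
      · -- dotted point inside an undotted cup: impossible
        exfalso
        obtain ⟨hl, hr⟩ := hf.nest (i := pt a) (j := pt b)
          (Fin.lt_def.mpr (by simp; omega))
          (Fin.lt_def.mpr (by simp; omega))
          (Fin.lt_def.mpr (by simp; omega))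
        have := Fin.lt_def.mp hl
        simp at this
        omega
    · rcases hlow b hb with ⟨hb1, hb2, hb3, hb4⟩ | ⟨hb1, hb2, bb, hgbb, hbb', hgfbb, hxb, hxb3, hadjb⟩
      · -- undotted cup inside a dotted cup
        have hfx : (D.f (D.f ba)).val = ba.val := by rw [hinvol]
        have hba1 := hba'.1
        have hba2 := hba'.2
        have hpa := pt_val a
        have hpb := pt_val b
        have hgap := dot_gap_closed hf (p := pt a) (x := D.f ba) (r := pt b)
          (by omega) ha2 hba2 (by omega) (by omega) (by omega) (by omega)
        exact Fin.lt_def.mpr (by omega)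
      · -- dotted point inside a dotted cup: impossible
        exfalso
        have hpa := pt_val a
        have hpb := pt_val b
        exact hadja (pt b) (by omega) hb2 ⟨by omega, by omega⟩
  -- third condition: no fixed point inside a cup
  have hc3 : ∀ a e : Fin n, a < t.1 a → t.1 e = e → ¬(a < e ∧ e < t.1 a) := by
    intro a e ha he
    rintro ⟨h1, h2⟩
    have haval := Fin.lt_def.mp ha
    have h1val := Fin.lt_def.mp h1
    have h2val := Fin.lt_def.mp h2
    rcases hlow a ha with ⟨ha1, ha2, ha3, ha4⟩ | ⟨ha1, ha2, ba, hgba, hba', hgfba, hxa, hxa3, hadja⟩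
    · -- a is an undotted cup
      obtain ⟨hl, hr⟩ := hf.nest (i := pt a) (j := pt e)
        (Fin.lt_def.mpr (by simp; omega))
        (Fin.lt_def.mpr (by simp; omega))
        (Fin.lt_def.mpr (by simp; omega))
      have hlv := Fin.lt_def.mp hl
      have hrv := Fin.lt_def.mp hr
      simp at hlv
      rcases hfix e he with hq | ⟨hq, -⟩
      · omega
      · omega
    · -- a is a dotted cup
      rcases hfix e he with hq | ⟨hq, -⟩
      · -- e is an undotted edge
        have hfx : (D.f (D.f ba)).val = ba.val := by rw [hinvol]
        have hba1 := hba'.1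
        have hba2 := hba'.2
        have hpa := pt_val a
        have hpe := pt_val e
        have hgap := dot_gap_closed hf (p := pt a) (x := D.f ba) (r := pt e)
          (by omega) ha2 hba2 (by omega) (by omega) (by omega) (by omega)
        omega
      · -- e is a dotted point strictly between the linked pair of a
        have hpa := pt_val a
        have hpe := pt_val e
        exact hadja (pt e) (by omega) hq ⟨by omega, by omega⟩
  -- fifth condition: accessibility of dots
  have hc5 : ∀ i, t.2 i = true → i ≤ t.1 i →
      (∀ j, j < t.1 j → ¬(j < i ∧ t.1 i < t.1 j)) ∧ (∀ e, t.1 e = e → ¬ e < i) := by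
    intro i hd hle
    have hdot : (D.f (pt i)).val < 2 * n := by
      rcases hmain i with ⟨h1, -⟩ | ⟨h1, -⟩ | ⟨-, h2, -⟩
      · rw [h1] at hd; exact absurd hd (by simp)
      · rw [h1] at hd; exact absurd hd (by simp)
      · exact h2
    have hleval := Fin.le_def.mp hle
    constructor
    · intro j hj
      rintro ⟨h1, h2⟩
      have h1val := Fin.lt_def.mp h1
      have h2val := Fin.lt_def.mp h2
      have hjval := Fin.lt_def.mp hj
      rcases hlow j hj with ⟨hj1, hj2, hj3, hj4⟩ | ⟨hj1, hj2, bj, hgbj, hbj', hgfbj, hxj, hxj3, hadjj⟩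
      · obtain ⟨hl, hr⟩ := hf.nest (i := pt j) (j := pt i)
          (Fin.lt_def.mpr (by simp; omega))
          (Fin.lt_def.mpr (by simp; omega))
          (Fin.lt_def.mpr (by simp; omega))
        have hlv := Fin.lt_def.mp hl
        simp at hlv
        omega
      · exact hadjj (pt i) (by simp) hdot ⟨by simp; omega, by simp; omega⟩
    · intro e he hei
      have heival := Fin.lt_def.mp hei
      rcases hfix e he with hq | ⟨hq, be, hgbe, hbe', hbe3, hadje⟩
      · -- undotted edge left of a dotted point: noncrossing violation
        have hpi := pt_val i
        have hpe := pt_val e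
        have hival := i.isLt
        have heval := e.isLt
        have h5 := hf.1.noncross (D.f (pt i)) (pt e)
          (by rw [hinvol]; exact Fin.lt_def.mpr (by omega))
          (Fin.lt_def.mpr (by omega))
          (Fin.lt_def.mpr (by omega))
          (by rw [hinvol]; exact Fin.lt_def.mpr (by omega))
        rw [hinvol] at h5
        have h6 := Fin.lt_def.mp h5
        omega
      · -- dotted edge left of a dotted point
        have hpi := pt_val i
        have hpe := pt_val e
        have hival := i.isLt
        exact hadje (pt i) (by omega) hdot ⟨by omega, by omega⟩
  -- recovery of the weight from the cut
  have hrec : ∀ i : Fin n, α i = (t.2 i || decide (t.1 i < i)) := by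
    intro i
    have hival := i.isLt
    have hpi := pt_val i
    have hlab : extLab α (pt i) = α i := extLab_pt' α i
    rcases hmain i with ⟨h1, h2, h3, h4⟩ | ⟨h1, h2, h3⟩ | ⟨h1, h2, -⟩
    · have hne := hnfix i
      rcases Nat.lt_or_ge (t.1 i).val i.val with hq | hq
      · have h5 : D.f (pt i) < pt i := Fin.lt_def.mpr (by omega)
        have h6 := (hf.lab_true_iff (pt i)).mp h5
        rw [hlab] at h6
        have h7 : t.1 i < i := Fin.lt_def.mpr hq
        rw [h6, h1]
        simp [h7]
      · have h5 : pt i < D.f (pt i) := Fin.lt_def.mpr (by omega)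
        have h6 := (hf.lab_false_iff (pt i)).mp h5
        rw [hlab] at h6
        have h7 : ¬ t.1 i < i := by rw [Fin.lt_def]; omega
        rw [h6, h1]
        simp [h7]
    · have h5 : pt i < D.f (pt i) := Fin.lt_def.mpr (by omega)
      have h6 := (hf.lab_false_iff (pt i)).mp h5
      rw [hlab] at h6
      rw [h6, h1, h2]
      simp
    · have h5 : D.f (pt i) < pt i := Fin.lt_def.mpr (by omega)
      have h6 := (hf.lab_true_iff (pt i)).mp h5
      rw [hlab] at h6
      rw [h6, h1]
      simp
  -- sixth condition: parity
  have hc6 : Even ({i : Fin n | t.1 i = i ∧ t.2 i = true}.ncard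
      + {i : Fin n | i < t.1 i ∧ t.2 i = false}.ncard) := by
    apply (even_transfer t.1 t.2 hc1 hc4).mp
    have hset : {i : Fin n | (t.2 i || decide (t.1 i < i)) = true} = {i : Fin n | α i = true} := by
      ext i
      rw [Set.mem_setOf_eq, Set.mem_setOf_eq, ← hrec i]
    rw [hset]
    exact hα
  exact ⟨⟨hc1, hc2, hc3, hc4, hc5, hc6⟩, hrec⟩

end CutMain

/-- Cutting defines a bijection between the set `C(W^p)` of symmetric
type `D` cup diagrams on `4n` points and the set `dC(n)` of (even) decorated cup
diagrams: cups within `{1,…,n}` stay; cups from `{1,…,n}` to `{n+1,…,2n}` become edges;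
a linked pair with both endpoints in `{1,…,n}` becomes a dotted cup; a linked pair with
one endpoint in `{1,…,n}` becomes a dotted edge; linked pairs entirely beyond `n` are
removed.  (Point `i` of the cut diagram corresponds to the point with index `2n + i`,
and the linked partner of an endpoint is recovered via the mirror map.) -/
theorem statement_16 (n : ℕ) (hn : 4 ≤ n)
    (G : Wp n → (Fin (4 * n) → Fin (4 * n))) (hG : ∀ w, IsCupDiagram w.1 (G w))
    (T : Wp n → RawDiag n)
    (hT : ∀ (w : Wp n) (i : Fin n),
      let p : Fin (4 * n) := ⟨2 * n + i.val, by have := i.isLt; omega⟩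
      let c := G w p
      (2 * n ≤ c.val ∧ c.val < 3 * n → ((T w).1 i).val + 2 * n = c.val ∧ (T w).2 i = false) ∧
      (3 * n ≤ c.val → (T w).1 i = i ∧ (T w).2 i = false) ∧
      (c.val < 2 * n → (T w).2 i = true ∧
        (2 * n ≤ (mirror c).val ∧ (mirror c).val < 3 * n →
          ((T w).1 i).val + 2 * n = (mirror c).val) ∧
        (3 * n ≤ (mirror c).val → (T w).1 i = i))) :
    Set.BijOn T Set.univ {D : RawDiag n | IsDecCup D} := by
  have hcm : ∀ w : Wp n, IsDecCup (T w) ∧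
      ∀ i : Fin n, w.1 i = ((T w).2 i || decide ((T w).1 i < i)) := by
    intro w
    obtain ⟨D, hD⟩ := hG w
    refine cut_main w.2 D (T w) ?_
    intro i
    have hti := hT w i
    rw [← hD] at hti
    exact hti
  refine ⟨?_, ?_, ?_⟩
  · intro w _
    exact (hcm w).1
  · intro w _ w' _ heq
    apply Subtype.ext
    funext i
    have e1 := (hcm w).2 i
    have e2 := (hcm w').2 i
    rw [heq] at e1
    exact e1.trans e2.symm
  · intro d hd
    simp only [Set.mem_setOf_eq] at hd
    have hEv : EvenMinus (fun i => (d.2 i || decide (d.1 i < i))) :=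
      (even_transfer d.1 d.2 hd.1 hd.2.2.2.1).mpr hd.2.2.2.2.2
    have h1 := hcm ⟨_, hEv⟩
    refine ⟨⟨_, hEv⟩, Set.mem_univ _, ?_⟩
    exact dc_unique h1.1 hd (fun i => (h1.2 i).symm)

end TypeD
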